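/- arXiv:2510.26869 — 4 statements merged into one kernel-verified Lean document; each statement's English description precedes it below -/
import Mathlib

section
/- The Catalan numbers satisfy the constant-coefficient rational recursion C(n+2) = 2·C(n+1)·(8·C(n) + C(n+1)) / (10·C(n) - C(n+1)) for all n ∈ ℕ, and moreover 10·C(n) - C(n+1) ≠ 0 for all n. -/
lemma cat_rec (n : ℕ) : (n + 2) * catalan (n + 1) = (4 * n + 2) * catalan n := by
  have h1 := succ_mul_catalan_eq_centralBinom (n + 1)
  have h2 := Nat.succ_mul_centralBinom_succ n
  have h3 := succ_mul_catalan_eq_centralBinom n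
  have key : (n + 1) * ((n + 2) * catalan (n + 1)) = (n + 1) * ((4 * n + 2) * catalan n) := by
    calc (n + 1) * ((n + 2) * catalan (n + 1)) = (n + 1) * Nat.centralBinom (n + 1) := by
          rw [← h1]
      _ = 2 * (2 * n + 1) * Nat.centralBinom n := h2
      _ = 2 * (2 * n + 1) * ((n + 1) * catalan n) := by rw [h3]
      _ = (n + 1) * ((4 * n + 2) * catalan n) := by ring
  exact Nat.eq_of_mul_eq_mul_left (Nat.succ_pos n) key

lemma catalan_pos' (n : ℕ) : 0 < catalan n := by
  have h := succ_mul_catalan_eq_centralBinom n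
  have hc := Nat.centralBinom_pos n
  by_contra h0
  push_neg at h0
  interval_cases c : catalan n
  omega

lemma cat_rec_int (n : ℕ) :
    ((n : ℤ) + 2) * catalan (n + 1) = (4 * n + 2) * catalan n := by
  exact_mod_cast cat_rec n

/-- The Catalan numbers satisfy the constant-coefficient rational recursion
`C(n+2) = 2 C(n+1) (8 C(n) + C(n+1)) / (10 C(n) - C(n+1))`, and `10 C(n) - C(n+1) ≠ 0`. -/
theorem stmt_5 : ∀ n : ℕ,
    (10 * (catalan n : ℤ) - (catalan (n + 1) : ℤ) ≠ 0) ∧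
    (10 * (catalan n : ℤ) - (catalan (n + 1) : ℤ)) * (catalan (n + 2) : ℤ)
      = 2 * (catalan (n + 1) : ℤ) * (8 * (catalan n : ℤ) + (catalan (n + 1) : ℤ)) := by
  intro n
  set a : ℤ := (catalan n : ℤ) with ha
  set b : ℤ := (catalan (n + 1) : ℤ) with hb
  set c : ℤ := (catalan (n + 2) : ℤ) with hc
  have h1 : ((n : ℤ) + 2) * b = (4 * n + 2) * a := cat_rec_int n
  have h2 : ((n : ℤ) + 3) * c = (4 * n + 6) * b := by
    have := cat_rec_int (n + 1)
    push_cast at this ⊢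
    linarith [this]
  have hne : 10 * a - b ≠ 0 := by
    have h6 : ((n : ℤ) + 2) * (10 * a - b) = 6 * ((n : ℤ) + 3) * a := by linarith [h1]
    have ha0 : (0 : ℤ) < a := by exact_mod_cast Nat.cast_pos.mpr (catalan_pos' n)
    intro h
    rw [h, mul_zero] at h6
    have : (0 : ℤ) < 6 * ((n : ℤ) + 3) * a := by positivity
    omega
  refine ⟨hne, ?_⟩
  have hnz : ((n : ℤ) + 2) * ((n : ℤ) + 3) ≠ 0 := by positivity
  have key : ((n : ℤ) + 2) * ((n : ℤ) + 3) * ((10 * a - b) * c) =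
      ((n : ℤ) + 2) * ((n : ℤ) + 3) * (2 * b * (8 * a + b)) := by
    linear_combination ((n : ℤ) + 2) * (10 * a - b) * h2 - 6 * ((n : ℤ) + 2) * b * h1
  exact mul_left_cancel₀ hnz key
end

section
/- The guessed difference equation for Fibonacci at powers of 2 factors correctly: for u(n) = F(2^n), the polynomial -(u(n) - 1)·(5·u(n)^4 + 4·u(n)^2 - u(n+1)^2) vanishes for all n ∈ ℕ (for n = 0 the first factor vanishes since F(2) = 1; for n ≥ 1 the second factor vanishes). -/
lemma cassini (m : ℕ) :
    ((Nat.fib (m+1) : ℤ))^2 - Nat.fib (m+1) * Nat.fib m - (Nat.fib m)^2 = (-1)^m := by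
  induction m with
  | zero => simp
  | succ k ih =>
    have h : (Nat.fib (k+2) : ℤ) = Nat.fib k + Nat.fib (k+1) := by
      rw [Nat.fib_add_two]; push_cast; ring
    rw [h, pow_succ]
    linear_combination -ih

lemma fib2m (m : ℕ) :
    (Nat.fib (2*m) : ℤ) = Nat.fib m * (2 * Nat.fib (m+1) - Nat.fib m) := by
  rw [Nat.fib_two_mul]
  have : Nat.fib m ≤ 2 * Nat.fib (m+1) :=
    le_trans Nat.fib_le_fib_succ (by omega)
  rw [Nat.cast_mul, Nat.cast_sub this]
  push_cast
  ring

lemma key (m : ℕ) (hm : Even m) :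
    (Nat.fib (2*m) : ℤ)^2 = 5 * (Nat.fib m : ℤ)^4 + 4 * (Nat.fib m)^2 := by
  have hc := cassini m
  rw [hm.neg_one_pow] at hc
  rw [fib2m]
  nlinarith [hc]

/-- For `u n = F(2^n)`, the guessed difference polynomial
`-(u(n) - 1)(5 u(n)⁴ + 4 u(n)² - u(n+1)²)` vanishes for all `n`. -/
theorem stmt_8 (u : ℕ → ℤ) (hu : ∀ n, u n = (Nat.fib (2 ^ n) : ℤ)) :
    ∀ n : ℕ, -((u n - 1) * (5 * u n ^ 4 + 4 * u n ^ 2 - u (n + 1) ^ 2)) = 0 := by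
  intro n
  match n with
  | 0 => simp [hu 0]
  | 1 => norm_num [hu 1]
  | (k+2) =>
    have h2 : 2 ^ (k + 3) = 2 * 2 ^ (k + 2) := by ring
    have he : Even (2 ^ (k+2)) := by
      exact (Nat.even_pow).2 ⟨even_two, by omega⟩
    have := key (2 ^ (k+2)) he
    rw [hu (k+2), hu (k+3), h2]
    rw [this]
    ring
end

section
/- The exponential generating function coefficients of labelled rooted trees, u(n) = n^(n-1)/n! for n ≥ 1 and u(0) = 0, satisfy the nonlinear recursion n·u(n+1) = sum_{k=0}^{n-1} (k+1)·u(k+1)·u(n-k) for all n ≥ 1, with u(1) = 1. -/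
/-!
Multiplied by `n!`, the recursion is the Abel-type identity
`∑_{k<n} C(n,k) (k+1)^k (n-k)^(n-k-1) = n (n+1)^(n-1)`. Write `k+1 = z - (n-k)` with `z = n+1`
and expand in powers of `z`: the coefficient of `z^l` is `C(n,l)` times an alternating binomial
sum of `(p-1)`-th powers, `p = n-l`. That sum is a `p`-th forward difference of a polynomial of
degree `p-1`, so it vanishes unless `p = 1`, leaving only `C(n,n-1) z^(n-1)`.
-/

open Finset

section AbelIdentity

variable {R : Type*} [CommRing R]

theorem sum_range_succ_neg_one_pow_mul_choose_mul_pow_eq_zero {j p : ℕ} (h : j < p) :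
    ∑ m ∈ range (p + 1), (-1 : R) ^ (p - m) * p.choose m * (m : R) ^ j = 0 := by
  have := congr_fun (fwdDiff_iter_pow_eq_zero_of_lt (R := R) h) 0
  rw [fwdDiff_iter_eq_sum_shift] at this
  simpa [zsmul_eq_mul] using this

theorem sum_range_neg_one_pow_mul_choose_mul_sub_pow_pred (p : ℕ) :
    ∑ q ∈ range p, (-1 : R) ^ q * p.choose q * ((p - q : ℕ) : R) ^ (p - 1) =
      if p = 1 then 1 else 0 := by
  rcases Nat.lt_or_ge p 2 with hp | hp
  · interval_cases p <;> simp
  have hlast : (-1 : R) ^ p * p.choose p * ((p - p : ℕ) : R) ^ (p - 1) = 0 := by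
    simp [zero_pow (by omega : p - 1 ≠ 0)]
  calc ∑ q ∈ range p, (-1 : R) ^ q * p.choose q * ((p - q : ℕ) : R) ^ (p - 1)
      = ∑ q ∈ range (p + 1), (-1 : R) ^ q * p.choose q * ((p - q : ℕ) : R) ^ (p - 1) := by
        rw [sum_range_succ, hlast, add_zero]
    _ = ∑ m ∈ range (p + 1), (-1 : R) ^ (p - m) * p.choose m * (m : R) ^ (p - 1) := by
        rw [← sum_range_reflect]
        refine sum_congr rfl fun m hm => ?_
        have hm : m ≤ p := Nat.lt_succ_iff.mp (mem_range.mp hm)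
        rw [Nat.add_sub_cancel, Nat.sub_sub_self hm, Nat.choose_symm hm]
    _ = if p = 1 then 1 else 0 := by
        rw [if_neg (by omega), sum_range_succ_neg_one_pow_mul_choose_mul_pow_eq_zero (by omega)]

theorem sum_range_choose_mul_sub_pow_mul_pow_pred (n : ℕ) (z : R) :
    ∑ k ∈ range n, n.choose k * (z - (n - k : ℕ)) ^ k * ((n - k : ℕ) : R) ^ (n - k - 1) =
      n * z ^ (n - 1) := by
  calc ∑ k ∈ range n, n.choose k * (z - (n - k : ℕ)) ^ k * ((n - k : ℕ) : R) ^ (n - k - 1)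
      = ∑ k ∈ range n, ∑ l ∈ range (k + 1), n.choose k *
          (z ^ l * (-((n - k : ℕ) : R)) ^ (k - l) * k.choose l) *
          ((n - k : ℕ) : R) ^ (n - k - 1) := by
        simp_rw [sub_eq_add_neg, add_pow, mul_sum, sum_mul]
    _ = ∑ l ∈ range n, ∑ k ∈ Ico l n, n.choose k *
          (z ^ l * (-((n - k : ℕ) : R)) ^ (k - l) * k.choose l) *
          ((n - k : ℕ) : R) ^ (n - k - 1) :=
        sum_comm' fun k l => by simp only [mem_range, mem_Ico]; omega
    _ = ∑ l ∈ range n, n.choose l * z ^ l *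
          ∑ q ∈ range (n - l),
            (-1 : R) ^ q * (n - l).choose q * ((n - l - q : ℕ) : R) ^ (n - l - 1) := by
        refine sum_congr rfl fun l _ => ?_
        rw [sum_Ico_eq_sum_range, mul_sum]
        refine sum_congr rfl fun q hq => ?_
        have hq : q < n - l := mem_range.mp hq
        have hchoose :
            (n.choose (l + q) : R) * (l + q).choose l = n.choose l * (n - l).choose q := by
          have := Nat.choose_mul (n := n) (k := l + q) (s := l) (by omega)
          rw [Nat.add_sub_cancel_left] at this
          exact_mod_cast congrArg (Nat.cast : ℕ → R) this
        have hpow : ((n - l - q : ℕ) : R) ^ q * ((n - l - q : ℕ) : R) ^ (n - l - q - 1) =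
            ((n - l - q : ℕ) : R) ^ (n - l - 1) := by
          rw [← pow_add]; congr 1; omega
        rw [Nat.add_sub_cancel_left, neg_pow, show n - (l + q) = n - l - q by omega]
        linear_combination (z ^ l * (-1) ^ q * ((n - l - q : ℕ) : R) ^ q *
          ((n - l - q : ℕ) : R) ^ (n - l - q - 1)) * hchoose +
          (n.choose l * (n - l).choose q * z ^ l * (-1) ^ q : R) * hpow
    _ = ∑ l ∈ range n, n.choose l * z ^ l * if n - l = 1 then 1 else 0 := by
        simp_rw [sum_range_neg_one_pow_mul_choose_mul_sub_pow_pred]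
    _ = n * z ^ (n - 1) := by
        rcases Nat.eq_zero_or_pos n with rfl | hn
        · simp
        rw [sum_eq_single_of_mem (n - 1) (mem_range.mpr (by omega)) fun l _ hl => by
          rw [if_neg (by omega), mul_zero]]
        rw [if_pos (by omega), mul_one, Nat.choose_symm_of_eq_add (by omega : n = n - 1 + 1),
          Nat.choose_one_right]

end AbelIdentity

open Nat in
theorem cast_succ_mul_div_factorial_mul_div_factorial {K : Type*} [Field K] [CharZero K]
    {k n : ℕ} (hk : k ≤ n) (a b : K) :
    ((k : K) + 1) * (a / (k + 1)!) * (b / (n - k)!) = n.choose k * a * b / n ! := by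
  have : (n ! : K) ≠ 0 := Nat.cast_ne_zero.mpr n.factorial_ne_zero
  rw [Nat.cast_choose K hk, Nat.factorial_succ]
  push_cast
  field_simp

theorem stmt_12_general (u : ℕ → ℚ)
    (h : ∀ n : ℕ, 1 ≤ n → u n = (n : ℚ) ^ (n - 1) / (Nat.factorial n : ℚ)) :
    u 1 = 1 ∧ ∀ n : ℕ, 1 ≤ n →
      (n : ℚ) * u (n + 1)
        = ∑ k ∈ Finset.range n, ((k : ℚ) + 1) * u (k + 1) * u (n - k) := by
  refine ⟨by simp [h 1 le_rfl], fun n hn => ?_⟩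
  have hterm : ∀ k ∈ range n, ((k : ℚ) + 1) * u (k + 1) * u (n - k) =
      n.choose k * ((n + 1 : ℚ) - (n - k : ℕ)) ^ k * ((n - k : ℕ) : ℚ) ^ (n - k - 1) /
        n.factorial := by
    intro k hk
    have hk : k < n := mem_range.mp hk
    rw [h (k + 1) (by omega), h (n - k) (by omega), Nat.add_sub_cancel,
      cast_succ_mul_div_factorial_mul_div_factorial hk.le, Nat.cast_sub hk.le]
    push_cast
    ring
  obtain ⟨m, rfl⟩ := Nat.exists_eq_add_of_le' hn
  rw [sum_congr rfl hterm, ← sum_div, sum_range_choose_mul_sub_pow_mul_pow_pred,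
    h (m + 1 + 1) (by omega), Nat.factorial_succ]
  push_cast
  field_simp
  ring

/-- The EGF coefficients of labelled rooted trees, `u n = n^(n-1)/n!` for `n ≥ 1`
and `u 0 = 0`, satisfy `u 1 = 1` and the nonlinear recursion
`n · u(n+1) = ∑_{k=0}^{n-1} (k+1) u(k+1) u(n-k)` for all `n ≥ 1`. -/
theorem stmt_12 (u : ℕ → ℚ) (h0 : u 0 = 0)
    (h : ∀ n : ℕ, 1 ≤ n → u n = (n : ℚ) ^ (n - 1) / (Nat.factorial n : ℚ)) :
    u 1 = 1 ∧ ∀ n : ℕ, 1 ≤ n →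
      (n : ℚ) * u (n + 1)
        = ∑ k ∈ Finset.range n, ((k : ℚ) + 1) * u (k + 1) * u (n - k) :=
  stmt_12_general u h
end

section
/- If a sequence u : ℕ → K (K a field) satisfies a rationalizing first-order constant-coefficient polynomial difference equation whose leading-coefficient polynomial never vanishes along u, and g : ℕ → ℕ is an arithmetic progression g(n) = a·n + b with a ≥ 1, then the subsequence n ↦ u(g(n)) also satisfies a first-order rational recursion, i.e. there is a rational function R over K with u(g(n+1)) = R(u(g(n))) for all n whenever the iterates are defined. -/
open Polynomial in
private lemma homog_eval {K : Type*} [Field K] (P p q : Polynomial K) (x : K)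
    (hq : q.eval x ≠ 0) :
    (∑ i ∈ Finset.range (P.natDegree + 1),
        Polynomial.C (P.coeff i) * p ^ i * q ^ (P.natDegree - i)).eval x
      = q.eval x ^ P.natDegree * P.eval (p.eval x / q.eval x) := by
  rw [Polynomial.eval_finset_sum, Polynomial.eval_eq_sum_range (p := P), Finset.mul_sum]
  apply Finset.sum_congr rfl
  intro i hi
  have hi' : i ≤ P.natDegree := Finset.mem_range_succ_iff.mp hi
  simp only [Polynomial.eval_mul, Polynomial.eval_pow, Polynomial.eval_C]
  rw [div_pow, pow_sub₀ _ hq hi']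
  field_simp

private lemma iter_rat {K : Type*} [Field K] (u : ℕ → K) (P Q : Polynomial K)
    (hQ : ∀ n, Polynomial.eval (u n) Q ≠ 0)
    (hu : ∀ n, u (n + 1) = Polynomial.eval (u n) P / Polynomial.eval (u n) Q)
    (k : ℕ) :
    ∃ Pk Qk : Polynomial K, (∀ m, Qk.eval (u m) ≠ 0) ∧
      ∀ m, u (m + k) = Pk.eval (u m) / Qk.eval (u m) := by
  induction k with
  | zero =>
    refine ⟨Polynomial.X, 1, fun m => by simp, fun m => by simp⟩
  | succ k ih =>
    obtain ⟨Pk, Qk, hQk, huk⟩ := ih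
    set A : Polynomial K := ∑ i ∈ Finset.range (P.natDegree + 1),
        Polynomial.C (P.coeff i) * Pk ^ i * Qk ^ (P.natDegree - i) with hA
    set B : Polynomial K := ∑ i ∈ Finset.range (Q.natDegree + 1),
        Polynomial.C (Q.coeff i) * Pk ^ i * Qk ^ (Q.natDegree - i) with hB
    refine ⟨A * Qk ^ Q.natDegree, B * Qk ^ P.natDegree, ?_, ?_⟩
    · intro m
      have hBe : B.eval (u m)
          = Qk.eval (u m) ^ Q.natDegree * Q.eval (Pk.eval (u m) / Qk.eval (u m)) :=
        homog_eval Q Pk Qk (u m) (hQk m)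
      rw [Polynomial.eval_mul, Polynomial.eval_pow, hBe, ← huk m]
      exact mul_ne_zero (mul_ne_zero (pow_ne_zero _ (hQk m)) (hQ _)) (pow_ne_zero _ (hQk m))
    · intro m
      have hAe : A.eval (u m)
          = Qk.eval (u m) ^ P.natDegree * P.eval (Pk.eval (u m) / Qk.eval (u m)) :=
        homog_eval P Pk Qk (u m) (hQk m)
      have hBe : B.eval (u m)
          = Qk.eval (u m) ^ Q.natDegree * Q.eval (Pk.eval (u m) / Qk.eval (u m)) :=
        homog_eval Q Pk Qk (u m) (hQk m)
      have h1 : u (m + (k + 1)) = u ((m + k) + 1) := by ring_nf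
      rw [h1, hu (m + k), huk m]
      rw [Polynomial.eval_mul, Polynomial.eval_mul, Polynomial.eval_pow,
        Polynomial.eval_pow, hAe, hBe]
      have hqk : Qk.eval (u m) ≠ 0 := hQk m
      have hQv : Q.eval (Pk.eval (u m) / Qk.eval (u m)) ≠ 0 := by
        rw [← huk m]; exact hQ _
      field_simp

/-- If `u` satisfies a first-order constant-coefficient rational recursion
`u(n+1) = P(u n)/Q(u n)` with `Q(u n) ≠ 0` always, and `g(n) = a n + b` with `a ≥ 1`,
then the subsequence `v n = u (a n + b)` also satisfies a first-order rational recursion. -/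
theorem stmt_15 {K : Type*} [Field K] (u : ℕ → K) (P Q : Polynomial K)
    (hQ : ∀ n, Polynomial.eval (u n) Q ≠ 0)
    (hu : ∀ n, u (n + 1) = Polynomial.eval (u n) P / Polynomial.eval (u n) Q)
    (a b : ℕ) (ha : 1 ≤ a) :
    ∃ P' Q' : Polynomial K,
      (∀ n, Polynomial.eval (u (a * n + b)) Q' ≠ 0) ∧
      ∀ n, u (a * (n + 1) + b)
        = Polynomial.eval (u (a * n + b)) P' / Polynomial.eval (u (a * n + b)) Q' := by
  obtain ⟨Pa, Qa, hQa, hua⟩ := iter_rat u P Q hQ hu a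
  refine ⟨Pa, Qa, fun n => hQa _, fun n => ?_⟩
  have : a * (n + 1) + b = (a * n + b) + a := by ring
  rw [this, hua (a * n + b)]
end
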